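/- arXiv:2507.08930 — 3 statements merged into one kernel-verified Lean document; each statement's English description precedes it below -/
import Mathlib

section
/- Let U and V be m-dimensional subspaces of H with respective orthonormal bases ψ₁,…,ψ_m and φ₁,…,φ_m, and let |ψ_A⟩ and |φ_A⟩ be the corresponding determinant states. Then |⟨ψ_A, φ_A⟩|² / (‖ψ_A‖² · ‖φ_A‖²) = det G̃, where G̃ is the m×m Gram matrix of the orthogonal projections of the φ_k onto U, i.e. G̃_{ij} = ⟨P_U φ_i, P_U φ_j⟩ with P_U the orthogonal projection of H onto U. -/
/-!
Expanding both antisymmetrizers, `inn` of two determinant states is a double sum over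
permutations; for each fixed permutation the inner sum is a signed determinant, and the signs
cancel, so `inn (detState x) (detState y) = det (⟪x i, y j⟫) / m!`.  For orthonormal families the
normalisations are `1 / m!`, so the left-hand side is `|det M|²` with `M k j = ⟪ψ k, φ j⟫`.
Since `ψ` is an orthonormal basis of `U`, the Gram matrix of the projected `φ j` is `Mᴴ * M`,
whose determinant is `|det M|²` as well.
-/

open scoped TensorProduct InnerProductSpace

/-- The permutation operator `P_σ` on the `m`-fold tensor power, acting on elementary
tensors by `P_σ (x₁ ⊗ ⋯ ⊗ x_m) = x_{σ⁻¹(1)} ⊗ ⋯ ⊗ x_{σ⁻¹(m)}`. -/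
noncomputable def permOp {H : Type*} [AddCommGroup H] [Module ℂ H] {m : ℕ}
    (σ : Equiv.Perm (Fin m)) :
    (⨂[ℂ] _ : Fin m, H) →ₗ[ℂ] ⨂[ℂ] _ : Fin m, H :=
  (PiTensorProduct.reindex ℂ (fun _ : Fin m => H) σ).toLinearMap

/-- The antisymmetrizer `S₋ = (1/m!) Σ_σ sgn(σ) P_σ`. -/
noncomputable def antisymmetrizer (H : Type*) [AddCommGroup H] [Module ℂ H] (m : ℕ) :
    (⨂[ℂ] _ : Fin m, H) →ₗ[ℂ] ⨂[ℂ] _ : Fin m, H :=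
  (m.factorial : ℂ)⁻¹ • ∑ σ : Equiv.Perm (Fin m), (((Equiv.Perm.sign σ : ℤ) : ℂ)) • permOp σ

/-- The determinant state `|φ_A⟩ = S₋ (φ₁ ⊗ ⋯ ⊗ φ_m)` of a family `φ₁, …, φ_m`. -/
noncomputable def detState {H : Type*} [AddCommGroup H] [Module ℂ H] {m : ℕ}
    (φ : Fin m → H) : ⨂[ℂ] _ : Fin m, H :=
  antisymmetrizer H m (PiTensorProduct.tprod ℂ φ)

open Equiv Matrix

theorem Matrix.sum_sign_mul_prod_symm_eq_sign_mul_det {R n : Type*} [CommRing R] [Fintype n]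
    [DecidableEq n] (A : Matrix n n R) (σ : Perm n) :
    ∑ τ : Perm n, ((Perm.sign τ : ℤ) : R) * ∏ i, A (τ.symm i) (σ.symm i)
      = ((Perm.sign σ : ℤ) : R) * A.det := by
  calc ∑ τ : Perm n, ((Perm.sign τ : ℤ) : R) * ∏ i, A (τ.symm i) (σ.symm i)
      = ∑ τ : Perm n, ((Perm.sign τ : ℤ) : R) * ∏ i, A.submatrix id σ.symm (τ i) i := by
        rw [← Equiv.sum_comp (Equiv.inv (Perm n))]
        simp [Perm.inv_def]
    _ = ((Perm.sign σ : ℤ) : R) * A.det := by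
        rw [← det_apply', det_permute', Perm.sign_symm]

theorem detState_eq_sum {H : Type*} [AddCommGroup H] [Module ℂ H] {m : ℕ} (z : Fin m → H) :
    detState z = (m.factorial : ℂ)⁻¹ •
      ∑ σ : Perm (Fin m),
        ((Perm.sign σ : ℤ) : ℂ) • PiTensorProduct.tprod ℂ (fun i => z (σ.symm i)) := by
  simp [detState, antisymmetrizer, permOp, LinearMap.sum_apply, PiTensorProduct.reindex_tprod]

theorem inn_detState_detState {H : Type*} [NormedAddCommGroup H] [InnerProductSpace ℂ H] {m : ℕ}
    (inn : (⨂[ℂ] _ : Fin m, H) →ₗ⋆[ℂ] (⨂[ℂ] _ : Fin m, H) →ₗ[ℂ] ℂ)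
    (h_inn : ∀ x y : Fin m → H,
      inn (PiTensorProduct.tprod ℂ x) (PiTensorProduct.tprod ℂ y) = ∏ i, ⟪x i, y i⟫_ℂ)
    (x y : Fin m → H) :
    inn (detState x) (detState y)
      = (m.factorial : ℂ)⁻¹ * (of fun i j => ⟪x i, y j⟫_ℂ).det := by
  set A : Matrix (Fin m) (Fin m) ℂ := of fun i j => ⟪x i, y j⟫_ℂ
  have hprod : ∀ σ τ : Perm (Fin m),
      ∏ i, ⟪x (σ.symm i), y (τ.symm i)⟫_ℂ = ∏ i, A (σ.symm i) (τ.symm i) := fun _ _ => rfl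
  simp only [detState_eq_sum, map_smulₛₗ, map_sum, LinearMap.smul_apply,
    LinearMap.sum_apply, smul_eq_mul, h_inn, hprod, A.sum_sign_mul_prod_symm_eq_sign_mul_det,
    map_intCast, map_inv₀, map_natCast]
  have hterm : ∀ σ : Perm (Fin m), ((Perm.sign σ : ℤ) : ℂ) *
      ((m.factorial : ℂ)⁻¹ * (((Perm.sign σ : ℤ) : ℂ) * A.det)) = (m.factorial : ℂ)⁻¹ * A.det := by
    intro σ
    have hsign : ((Perm.sign σ : ℤ) : ℂ) * ((Perm.sign σ : ℤ) : ℂ) = 1 := by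
      rw [← Int.cast_mul, Int.units_coe_mul_self, Int.cast_one]
    linear_combination (m.factorial : ℂ)⁻¹ * A.det * hsign
  rw [Finset.sum_congr rfl fun σ _ => hterm σ, Finset.sum_const, Finset.card_univ,
    Fintype.card_perm, Fintype.card_fin, nsmul_eq_mul]
  have hm : (m.factorial : ℂ) ≠ 0 := Nat.cast_ne_zero.2 m.factorial_ne_zero
  field_simp

noncomputable def Orthonormal.toOrthonormalBasisSpan {𝕜 E ι : Type*} [RCLike 𝕜]
    [NormedAddCommGroup E] [InnerProductSpace 𝕜 E] [Fintype ι] {v : ι → E}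
    (hv : Orthonormal 𝕜 v) : OrthonormalBasis ι 𝕜 (Submodule.span 𝕜 (Set.range v)) :=
  (Module.Basis.span hv.linearIndependent).toOrthonormalBasis <| by
    refine (Submodule.subtypeₗᵢ _).orthonormal_comp_iff.mp ?_
    convert hv using 1
    funext i
    simp

@[simp]
theorem Orthonormal.coe_toOrthonormalBasisSpan_apply {𝕜 E ι : Type*} [RCLike 𝕜]
    [NormedAddCommGroup E] [InnerProductSpace 𝕜 E] [Fintype ι] {v : ι → E}
    (hv : Orthonormal 𝕜 v) (i : ι) : (hv.toOrthonormalBasisSpan i : E) = v i := by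
  simp [Orthonormal.toOrthonormalBasisSpan]

theorem OrthonormalBasis.gram_orthogonalProjectionOnto {𝕜 E ι n : Type*} [RCLike 𝕜]
    [NormedAddCommGroup E] [InnerProductSpace 𝕜 E] [Fintype ι] {U : Submodule 𝕜 E}
    [U.HasOrthogonalProjection] (b : OrthonormalBasis ι 𝕜 U) (v : n → E) :
    letI M := of fun k j => ⟪(b k : E), v j⟫_𝕜
    gram 𝕜 (fun i => (U.orthogonalProjectionOnto (v i) : E)) = Mᴴ * M := by
  have h := gram_eq_conjTranspose_mul b (fun i => U.orthogonalProjectionOnto (v i))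
  simp only [b.repr_apply_apply, U.inner_orthogonalProjectionOnto_eq_of_mem_left] at h
  exact h

theorem detState_fidelity_eq_det_gram_proj_general
    {H : Type*} [NormedAddCommGroup H] [InnerProductSpace ℂ H] [FiniteDimensional ℂ H]
    {m : ℕ}
    (inn : (⨂[ℂ] _ : Fin m, H) →ₗ⋆[ℂ] (⨂[ℂ] _ : Fin m, H) →ₗ[ℂ] ℂ)
    (h_inn : ∀ x y : Fin m → H,
      inn (PiTensorProduct.tprod ℂ x) (PiTensorProduct.tprod ℂ y) = ∏ i, ⟪x i, y i⟫_ℂ)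
    (U : Submodule ℂ H) (ψ φ : Fin m → H)
    (hψon : Orthonormal ℂ ψ) (hφon : Orthonormal ℂ φ)
    (hψU : Submodule.span ℂ (Set.range ψ) = U) :
    ((‖inn (detState ψ) (detState φ)‖ : ℂ)^2)
        / (inn (detState ψ) (detState ψ) * inn (detState φ) (detState φ))
      = Matrix.det (Matrix.of fun i j =>
          ⟪((Submodule.orthogonalProjection U (φ i) : U) : H),
            ((Submodule.orthogonalProjection U (φ j) : U) : H)⟫_ℂ) := by
  subst hψU
  set M : Matrix (Fin m) (Fin m) ℂ := of fun k j => ⟪ψ k, φ j⟫_ℂ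
  have hG := hψon.toOrthonormalBasisSpan.gram_orthogonalProjectionOnto φ
  simp only [Orthonormal.coe_toOrthonormalBasisSpan_apply] at hG
  have hψ1 : (of fun i j => ⟪ψ i, ψ j⟫_ℂ) = 1 := gram_eq_one_iff_orthonormal.2 hψon
  have hφ1 : (of fun i j => ⟪φ i, φ j⟫_ℂ) = 1 := gram_eq_one_iff_orthonormal.2 hφon
  have hm : (m.factorial : ℂ) ≠ 0 := Nat.cast_ne_zero.2 m.factorial_ne_zero
  calc _ = (‖(m.factorial : ℂ)⁻¹ * M.det‖ : ℂ) ^ 2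
          / ((m.factorial : ℂ)⁻¹ * (m.factorial : ℂ)⁻¹) := by
        simp only [inn_detState_detState inn h_inn, hψ1, hφ1, det_one, mul_one, M]
    _ = star M.det * M.det := by
        rw [← Complex.conj_mul', map_mul, map_inv₀, Complex.conj_natCast, starRingEnd_apply]
        field_simp
    _ = (Mᴴ * M).det := by rw [det_mul, det_conjTranspose]
    _ = _ := congrArg det hG.symm

/-- For `m`-dimensional subspaces `U, V` with orthonormal bases `ψ` and `φ`,
`|⟨ψ_A, φ_A⟩|² / (‖ψ_A‖² ‖φ_A‖²) = det G̃`, where `G̃_{ij} = ⟨P_U φ_i, P_U φ_j⟩` is the Gram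
matrix of the orthogonal projections of the `φ_k` onto `U`.  (Here `‖x‖² = ⟨x, x⟩` for the
tensor-power inner product `inn`.) -/
theorem detState_fidelity_eq_det_gram_proj
    {H : Type*} [NormedAddCommGroup H] [InnerProductSpace ℂ H] [FiniteDimensional ℂ H]
    {m : ℕ}
    (inn : (⨂[ℂ] _ : Fin m, H) →ₗ⋆[ℂ] (⨂[ℂ] _ : Fin m, H) →ₗ[ℂ] ℂ)
    (h_inn : ∀ x y : Fin m → H,
      inn (PiTensorProduct.tprod ℂ x) (PiTensorProduct.tprod ℂ y) = ∏ i, ⟪x i, y i⟫_ℂ)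
    (U V : Submodule ℂ H) (ψ φ : Fin m → H)
    (hψon : Orthonormal ℂ ψ) (hφon : Orthonormal ℂ φ)
    (hψU : Submodule.span ℂ (Set.range ψ) = U)
    (hφV : Submodule.span ℂ (Set.range φ) = V) :
    ((‖inn (detState ψ) (detState φ)‖ : ℂ)^2)
        / (inn (detState ψ) (detState ψ) * inn (detState φ) (detState φ))
      = Matrix.det (Matrix.of fun i j =>
          ⟪((Submodule.orthogonalProjection U (φ i) : U) : H),
            ((Submodule.orthogonalProjection U (φ j) : U) : H)⟫_ℂ) :=
  detState_fidelity_eq_det_gram_proj_general inn h_inn U ψ φ hψon hφon hψU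
end

section
/- Let H be a Hermitian n×n complex matrix and φ₁,…,φ_m linearly independent vectors of ℂⁿ whose span is invariant under H, so that there exists an m×m complex matrix B with H φ_p = Σ_k B_{kp} φ_k for all p. Then for every orthonormal basis e₁,…,e_n of ℂⁿ and every m-tuple s = (s₁,…,s_m) of indices such that the matrix [Φ(s)]_{ij} = ⟨e_{s_i}, φ_j⟩ is invertible, one has Φ(s)⁻¹ Φ^{(H)}(s) = B, where [Φ^{(H)}(s)]_{ij} = ⟨e_{s_i}, H φ_j⟩. In particular the local energy matrix Φ(s)⁻¹Φ^{(H)}(s) is independent of s. -/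
open scoped Matrix

/-- If the span of the linearly independent vectors `φ₁,…,φ_m` is invariant
under the Hermitian matrix `H`, witnessed by `H φ_p = Σ_k B_{kp} φ_k`, then for every
orthonormal basis `e` of `ℂⁿ` and every tuple `s` for which `[Φ(s)]_{ij} = ⟨e_{s_i}, φ_j⟩` is
invertible, the local energy matrix satisfies `Φ(s)⁻¹ Φ^{(H)}(s) = B` (in particular it is
independent of `s`). -/
theorem local_energy_matrix_zero_variance
    {n m : ℕ} (H : Matrix (Fin n) (Fin n) ℂ) (hH : H.IsHermitian)
    (φ : Fin m → (Fin n → ℂ)) (hφ : LinearIndependent ℂ φ)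
    (B : Matrix (Fin m) (Fin m) ℂ)
    (hB : ∀ p, H.mulVec (φ p) = ∑ k, B k p • φ k)
    (e : Fin n → (Fin n → ℂ))
    (he : ∀ i j, star (e i) ⬝ᵥ e j = if i = j then (1 : ℂ) else 0)
    (s : Fin m → Fin n)
    (hs : IsUnit (Matrix.of fun i j => star (e (s i)) ⬝ᵥ φ j).det) :
    (Matrix.of fun i j => star (e (s i)) ⬝ᵥ φ j)⁻¹ *
        (Matrix.of fun i j => star (e (s i)) ⬝ᵥ H.mulVec (φ j)) = B := by
  have key : (Matrix.of fun i j => star (e (s i)) ⬝ᵥ H.mulVec (φ j)) =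
      (Matrix.of fun i j => star (e (s i)) ⬝ᵥ φ j) * B := by
    ext i j
    simp only [Matrix.of_apply, Matrix.mul_apply, hB j]
    simp [dotProduct, Finset.mul_sum, Finset.sum_mul, mul_comm, mul_left_comm]
    rw [Finset.sum_comm]
    exact Finset.sum_congr rfl fun k _ => Finset.sum_congr rfl fun x _ => by ring
  rw [key, ← Matrix.mul_assoc, Matrix.nonsing_inv_mul _ hs, Matrix.one_mul]
end

section
/- Let Ĥ be a self-adjoint operator on an n-dimensional complex inner product space H with eigenvalues E₀ ≤ E₁ ≤ ⋯ ≤ E_{n-1} (counted with multiplicity), let m ≤ n, and let 𝐇 = Σ_{k=1}^m 1⊗⋯⊗Ĥ⊗⋯⊗1 (with Ĥ in the k-th factor) act on H^{⊗m}. Then the antisymmetric subspace V₋(H^{⊗m}) = { x ∈ H^{⊗m} : P_σ x = sgn(σ) x for all σ ∈ S_m } is invariant under 𝐇, and the smallest eigenvalue of the restriction of 𝐇 to V₋(H^{⊗m}) equals Σ_{k=0}^{m-1} E_k; moreover this eigenvalue is attained at the determinant state S₋(v₀⊗⋯⊗v_{m-1}) built from an orthonormal family v₀,…,v_{m-1}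 of eigenvectors of Ĥ for the eigenvalues E₀,…,E_{m-1}. -/
open scoped TensorProduct InnerProductSpace

/-- The generalization `𝐇 = Σ_{k=1}^m 1 ⊗ ⋯ ⊗ Ĥ ⊗ ⋯ ⊗ 1` (with `Ĥ` in the `k`-th tensor
factor) of an operator `Ĥ` on `H` to an operator on `H^{⊗m}`. -/
noncomputable def bigOp {H : Type*} [AddCommGroup H] [Module ℂ H] {m : ℕ}
    (T : H →ₗ[ℂ] H) :
    (⨂[ℂ] _ : Fin m, H) →ₗ[ℂ] ⨂[ℂ] _ : Fin m, H :=
  ∑ k : Fin m, PiTensorProduct.map (fun i : Fin m => if i = k then T else LinearMap.id)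

/-- Membership in the antisymmetric subspace `V₋(H^{⊗m})`:
`x ∈ V₋ ↔ P_σ x = sgn(σ) • x` for all permutations `σ`. -/
def IsAntisymmetric {H : Type*} [AddCommGroup H] [Module ℂ H] {m : ℕ}
    (x : ⨂[ℂ] _ : Fin m, H) : Prop :=
  ∀ σ : Equiv.Perm (Fin m), permOp σ x = (((Equiv.Perm.sign σ : ℤ) : ℂ)) • x

/-!
Permutations of the tensor factors commute with `𝐇`, so `𝐇` preserves `V₋` and maps the
antisymmetrization of a product of eigenvectors to the same multiple of it. For the lower bound,
`𝐇` is diagonal in the product basis `u_{f 0} ⊗ ⋯ ⊗ u_{f (m-1)}` with eigenvalue `Σ_k E_{f k}`.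
A transposition fixing a non-injective `f` flips the sign of an antisymmetric tensor, so its
coefficient at `f` vanishes; hence the eigenvalue of an antisymmetric eigenvector is `Σ_k E_{f k}`
for some injective `f`, which is at least `Σ_{k<m} E_k` because `E` is monotone.
-/

open Module PiTensorProduct

theorem Fin.castLE_le_of_strictMono {m n : ℕ} (hmn : m ≤ n) {g : Fin m → Fin n}
    (hg : StrictMono g) (k : Fin m) : Fin.castLE hmn k ≤ g k := by
  obtain ⟨k, hk⟩ := k
  induction k with
  | zero => exact Fin.le_def.mpr (Nat.zero_le _)
  | succ k ih =>
    have hlt : g ⟨k, by omega⟩ < g ⟨k + 1, hk⟩ := hg (Nat.lt_succ_self k)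
    have hle := ih (by omega)
    rw [Fin.le_def, Fin.lt_def] at *
    simp only [Fin.val_castLE] at *
    omega

theorem Monotone.sum_castLE_le_sum_of_injective {α : Type*} [AddCommMonoid α] [PartialOrder α]
    [IsOrderedAddMonoid α] {m n : ℕ} (hmn : m ≤ n) {E : Fin n → α} (hE : Monotone E)
    {f : Fin m → Fin n} (hf : Function.Injective f) :
    ∑ k, E (Fin.castLE hmn k) ≤ ∑ k, E (f k) := by
  have hsorted : StrictMono (f ∘ Tuple.sort f) :=
    (Tuple.monotone_sort f).strictMono_of_injective (hf.comp (Tuple.sort f).injective)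
  calc ∑ k, E (Fin.castLE hmn k)
      ≤ ∑ k, E (f (Tuple.sort f k)) :=
        Finset.sum_le_sum fun k _ => hE (Fin.castLE_le_of_strictMono hmn hsorted k)
    _ = ∑ k, E (f k) := Equiv.sum_comp (Tuple.sort f) (E ∘ f)

section TensorPower

variable {H : Type*} [AddCommGroup H] [Module ℂ H] {m : ℕ} {ι : Type*}

@[simp]
theorem permOp_tprod (σ : Equiv.Perm (Fin m)) (x : Fin m → H) :
    permOp σ (tprod ℂ x) = tprod ℂ fun i => x (σ.symm i) :=
  reindex_tprod σ x

theorem permOp_mul_apply (σ τ : Equiv.Perm (Fin m)) (x : ⨂[ℂ] _ : Fin m, H) :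
    permOp (σ * τ) x = permOp σ (permOp τ x) :=
  (reindex_reindex τ σ x).symm

theorem permOp_bigOp (σ : Equiv.Perm (Fin m)) (T : H →ₗ[ℂ] H) (x : ⨂[ℂ] _ : Fin m, H) :
    permOp σ (bigOp T x) = bigOp T (permOp σ x) := by
  simp only [bigOp, LinearMap.sum_apply, map_sum]
  refine Fintype.sum_equiv σ _ _ fun k => ?_
  rw [permOp, LinearEquiv.coe_coe, ← map_reindex]
  congr 2
  funext i
  simp only [Equiv.symm_apply_eq]

theorem permOp_antisymmetrizer (σ : Equiv.Perm (Fin m)) (x : ⨂[ℂ] _ : Fin m, H) :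
    permOp σ (antisymmetrizer H m x) = ((Equiv.Perm.sign σ : ℤ) : ℂ) • antisymmetrizer H m x := by
  simp only [antisymmetrizer, LinearMap.smul_apply, LinearMap.sum_apply, map_smul, map_sum,
    ← permOp_mul_apply]
  rw [smul_comm ((Equiv.Perm.sign σ : ℤ) : ℂ), Finset.smul_sum (r := ((Equiv.Perm.sign σ : ℤ) : ℂ))]
  congr 1
  refine Fintype.sum_equiv (Equiv.mulLeft σ) _ _ fun τ => ?_
  simp [smul_smul, ← mul_assoc, ← Int.cast_mul, ← Units.val_mul]

theorem bigOp_antisymmetrizer (T : H →ₗ[ℂ] H) (x : ⨂[ℂ] _ : Fin m, H) :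
    bigOp T (antisymmetrizer H m x) = antisymmetrizer H m (bigOp T x) := by
  simp only [antisymmetrizer, LinearMap.smul_apply, LinearMap.sum_apply, map_smul, map_sum,
    permOp_bigOp]

theorem IsAntisymmetric.bigOp {x : ⨂[ℂ] _ : Fin m, H} (hx : IsAntisymmetric x)
    (T : H →ₗ[ℂ] H) : IsAntisymmetric (bigOp T x) := fun σ => by
  rw [permOp_bigOp, hx σ, map_smul]

theorem bigOp_tprod_of_eigen (T : H →ₗ[ℂ] H) (x : Fin m → H) (c : Fin m → ℂ)
    (hx : ∀ k, T (x k) = c k • x k) :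
    bigOp T (tprod ℂ x) = (∑ k, c k) • tprod ℂ x := by
  simp only [bigOp, LinearMap.sum_apply, map_tprod, Finset.sum_smul]
  refine Finset.sum_congr rfl fun k _ => ?_
  have hupdate : (fun i => (if i = k then T else LinearMap.id) (x i))
      = Function.update x k (c k • x k) := by
    funext i
    by_cases hik : i = k
    · subst hik; simp [hx]
    · simp [hik]
  rw [hupdate, MultilinearMap.map_update_smul, Function.update_eq_self]

theorem bigOp_detState_of_eigen (T : H →ₗ[ℂ] H) (x : Fin m → H) (c : Fin m → ℂ)
    (hx : ∀ k, T (x k) = c k • x k) :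
    bigOp T (detState x) = (∑ k, c k) • detState x := by
  rw [detState, bigOp_antisymmetrizer, bigOp_tprod_of_eigen T x c hx, map_smul]

theorem piTensorProduct_repr_permOp (b : Basis ι ℂ H) (σ : Equiv.Perm (Fin m))
    (x : ⨂[ℂ] _ : Fin m, H) (f : Fin m → ι) :
    (Basis.piTensorProduct fun _ => b).repr (permOp σ x) f
      = (Basis.piTensorProduct fun _ => b).repr x (f ∘ σ) := by
  set B := Basis.piTensorProduct fun _ : Fin m => b
  suffices Finsupp.lapply f ∘ₗ B.repr.toLinearMap ∘ₗ permOp σ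
      = Finsupp.lapply (f ∘ σ) ∘ₗ B.repr.toLinearMap from LinearMap.congr_fun this x
  refine PiTensorProduct.ext (MultilinearMap.ext fun y => ?_)
  simp only [LinearMap.compMultilinearMap_apply, LinearMap.comp_apply, LinearEquiv.coe_coe,
    permOp_tprod, Finsupp.lapply_apply, B, Basis.piTensorProduct_repr_tprod_apply,
    Function.comp_apply]
  exact (Equiv.prod_comp σ _).symm.trans (by simp)

theorem piTensorProduct_repr_bigOp (b : Basis ι ℂ H) (T : H →ₗ[ℂ] H) (c : ι → ℂ)
    (hb : ∀ i, T (b i) = c i • b i) (x : ⨂[ℂ] _ : Fin m, H) (f : Fin m → ι) :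
    (Basis.piTensorProduct fun _ => b).repr (bigOp T x) f
      = (∑ k, c (f k)) * (Basis.piTensorProduct fun _ => b).repr x f := by
  set B := Basis.piTensorProduct fun _ : Fin m => b
  suffices Finsupp.lapply f ∘ₗ B.repr.toLinearMap ∘ₗ bigOp T
      = (∑ k, c (f k)) • (Finsupp.lapply f ∘ₗ B.repr.toLinearMap) from LinearMap.congr_fun this x
  refine B.ext fun g => ?_
  have hg : bigOp T (B g) = (∑ k, c (g k)) • B g := by
    simpa [B] using bigOp_tprod_of_eigen T (fun k => b (g k)) (fun k => c (g k)) fun k => hb _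
  simp only [LinearMap.comp_apply, LinearMap.smul_apply, LinearEquiv.coe_coe, hg, map_smul,
    B.repr_self, Finsupp.lapply_apply, smul_eq_mul]
  rcases eq_or_ne g f with rfl | hgf
  · rfl
  · rw [Finsupp.single_eq_of_ne hgf.symm, mul_zero, mul_zero]

theorem IsAntisymmetric.piTensorProduct_repr_eq_zero (b : Basis ι ℂ H)
    {x : ⨂[ℂ] _ : Fin m, H} (hx : IsAntisymmetric x) {f : Fin m → ι}
    (hf : ¬ Function.Injective f) : (Basis.piTensorProduct fun _ => b).repr x f = 0 := by
  obtain ⟨i, j, hfij, hij⟩ : ∃ i j, f i = f j ∧ i ≠ j := by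
    simpa [Function.Injective] using hf
  have hswap : f ∘ Equiv.swap i j = f := funext (Equiv.apply_swap_eq_self hfij)
  have hrepr := piTensorProduct_repr_permOp b (Equiv.swap i j) x f
  rw [hx, Equiv.Perm.sign_swap hij, hswap] at hrepr
  exact neg_eq_self.mp (by simpa using hrepr)

theorem exists_injective_eq_sum_of_isAntisymmetric (b : Basis ι ℂ H)
    {T : H →ₗ[ℂ] H} {c : ι → ℂ} (hb : ∀ i, T (b i) = c i • b i)
    {x : ⨂[ℂ] _ : Fin m, H} (hx : IsAntisymmetric x) (hx0 : x ≠ 0) {μ : ℂ}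
    (hμ : bigOp T x = μ • x) : ∃ f : Fin m → ι, Function.Injective f ∧ μ = ∑ k, c (f k) := by
  set B := Basis.piTensorProduct fun _ : Fin m => b
  obtain ⟨f, hf⟩ : ∃ f, B.repr x f ≠ 0 := by
    simpa [DFunLike.ext_iff] using B.repr.map_ne_zero_iff.mpr hx0
  refine ⟨f, not_imp_comm.mp (hx.piTensorProduct_repr_eq_zero b) hf, mul_right_cancel₀ hf ?_⟩
  rw [← smul_eq_mul, ← Finsupp.smul_apply, ← map_smul, ← hμ]
  exact piTensorProduct_repr_bigOp b T c hb x f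

theorem piTensorProduct_repr_detState_self (b : Basis ι ℂ H) {g : Fin m → ι}
    (hg : Function.Injective g) :
    (Basis.piTensorProduct fun _ => b).repr (detState fun k => b (g k)) g
      = (m.factorial : ℂ)⁻¹ := by
  classical
  set B := Basis.piTensorProduct fun _ : Fin m => b
  have hσ : ∀ σ : Equiv.Perm (Fin m), B.repr (tprod ℂ fun i => b (g (σ.symm i))) g
      = if σ = 1 then 1 else 0 := by
    intro σ
    have hB : (tprod ℂ fun i => b (g (σ.symm i))) = B (g ∘ σ.symm) := by simp [B]
    rw [hB, B.repr_self]
    split_ifs with hσ1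
    · subst hσ1
      exact Finsupp.single_eq_same
    · obtain ⟨i, hi⟩ : ∃ i, σ i ≠ i := by
        simpa [Equiv.ext_iff] using hσ1
      refine Finsupp.single_eq_of_ne fun h => hi ?_
      simpa using hg (congrFun h (σ i))
  simp [detState, antisymmetrizer, hσ]

theorem detState_ne_zero (b : Basis ι ℂ H) {g : Fin m → ι} (hg : Function.Injective g) :
    detState (fun k => b (g k)) ≠ 0 := fun h => by
  have hcoeff := piTensorProduct_repr_detState_self b hg
  rw [h, map_zero, Finsupp.zero_apply, eq_comm, inv_eq_zero, Nat.cast_eq_zero] at hcoeff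
  exact m.factorial_ne_zero hcoeff

end TensorPower

theorem bigOp_antisymmetric_ground_energy_general
    {H : Type*} [NormedAddCommGroup H] [InnerProductSpace ℂ H]
    {n m : ℕ} (hm : m ≤ n)
    (T : H →ₗ[ℂ] H)
    (E : Fin n → ℝ) (hE : Monotone E)
    (u : OrthonormalBasis (Fin n) ℂ H)
    (hu : ∀ i, T (u i) = (E i : ℂ) • u i) :
    -- `V₋(H^{⊗m})` is invariant under `𝐇`
    (∀ x : ⨂[ℂ] _ : Fin m, H, IsAntisymmetric x → IsAntisymmetric (bigOp T x)) ∧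
    -- the determinant state of `u₀,…,u_{m-1}` lies in `V₋`, is nonzero, and attains the
    -- eigenvalue `Σ_{k=0}^{m-1} E_k`
    IsAntisymmetric (detState (fun k : Fin m => u (Fin.castLE hm k))) ∧
    detState (fun k : Fin m => u (Fin.castLE hm k)) ≠ 0 ∧
    bigOp T (detState (fun k : Fin m => u (Fin.castLE hm k)))
      = ((∑ k : Fin m, E (Fin.castLE hm k) : ℝ) : ℂ) •
          detState (fun k : Fin m => u (Fin.castLE hm k)) ∧
    -- `Σ_{k=0}^{m-1} E_k` is a lower bound on the eigenvalues of `𝐇` restricted to `V₋`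
    (∀ (μ : ℝ) (x : ⨂[ℂ] _ : Fin m, H), IsAntisymmetric x → x ≠ 0 →
      bigOp T x = (μ : ℂ) • x → (∑ k : Fin m, E (Fin.castLE hm k)) ≤ μ) := by
  have hb : ∀ i, T (u.toBasis i) = (E i : ℂ) • u.toBasis i := by simpa using hu
  refine ⟨fun x hx => hx.bigOp T, fun σ => permOp_antisymmetrizer σ _, ?_, ?_, ?_⟩
  · simpa using detState_ne_zero u.toBasis (Fin.castLE_injective hm)
  · rw [bigOp_detState_of_eigen T _ _ fun k => hu _, Complex.ofReal_sum]
  · intro μ x hx hx0 hμ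
    obtain ⟨f, hf, hμf⟩ := exists_injective_eq_sum_of_isAntisymmetric u.toBasis hb hx hx0 hμ
    rw [show μ = ∑ k, E (f k) by exact_mod_cast hμf]
    exact hE.sum_castLE_le_sum_of_injective hm hf

/-- Let `Ĥ` be a self-adjoint operator on an `n`-dimensional space `H` with
eigenvalues `E₀ ≤ ⋯ ≤ E_{n-1}` (given by a monotone `E` with an orthonormal eigenbasis `u`),
let `m ≤ n`, and let `𝐇 = Σ_k 1⊗⋯⊗Ĥ⊗⋯⊗1` act on `H^{⊗m}`.  Then the antisymmetric subspace
`V₋(H^{⊗m})` is invariant under `𝐇`, the determinant state built from `u₀,…,u_{m-1}` lies in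
`V₋`, is nonzero, and is an eigenvector of `𝐇` with eigenvalue `Σ_{k<m} E_k`; moreover every
eigenvalue `μ` of `𝐇` restricted to `V₋` satisfies `Σ_{k<m} E_k ≤ μ`, so `Σ_{k<m} E_k` is the
smallest eigenvalue of the restriction. -/
theorem bigOp_antisymmetric_ground_energy
    {H : Type*} [NormedAddCommGroup H] [InnerProductSpace ℂ H] [FiniteDimensional ℂ H]
    {n m : ℕ} (hm : m ≤ n) (hn : Module.finrank ℂ H = n)
    (T : H →ₗ[ℂ] H) (hT : LinearMap.IsSymmetric T)
    (E : Fin n → ℝ) (hE : Monotone E)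
    (u : OrthonormalBasis (Fin n) ℂ H)
    (hu : ∀ i, T (u i) = (E i : ℂ) • u i) :
    -- `V₋(H^{⊗m})` is invariant under `𝐇`
    (∀ x : ⨂[ℂ] _ : Fin m, H, IsAntisymmetric x → IsAntisymmetric (bigOp T x)) ∧
    -- the determinant state of `u₀,…,u_{m-1}` lies in `V₋`, is nonzero, and attains the
    -- eigenvalue `Σ_{k=0}^{m-1} E_k`
    IsAntisymmetric (detState (fun k : Fin m => u (Fin.castLE hm k))) ∧
    detState (fun k : Fin m => u (Fin.castLE hm k)) ≠ 0 ∧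
    bigOp T (detState (fun k : Fin m => u (Fin.castLE hm k)))
      = ((∑ k : Fin m, E (Fin.castLE hm k) : ℝ) : ℂ) •
          detState (fun k : Fin m => u (Fin.castLE hm k)) ∧
    -- `Σ_{k=0}^{m-1} E_k` is a lower bound on the eigenvalues of `𝐇` restricted to `V₋`
    (∀ (μ : ℝ) (x : ⨂[ℂ] _ : Fin m, H), IsAntisymmetric x → x ≠ 0 →
      bigOp T x = (μ : ℂ) • x → (∑ k : Fin m, E (Fin.castLE hm k)) ≤ μ) :=
  bigOp_antisymmetric_ground_energy_general hm T E hE u hu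
end
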